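/- For a C² embedded arc-length parametrized curve f, the density M₂(f) = (2/‖Δf‖²)⟨τ(s1)∧(Δf/‖Δf‖), τ(s2)∧(Δf/‖Δf‖)⟩ satisfies 2M₂(f) = −2 ∂²/(∂s1∂s2) log‖Δf‖² − (∂/∂s1 log‖Δf‖²)(∂/∂s2 log‖Δf‖²) for s1 ≠ s2. -/

import Mathlib

/-!
Write `Δ = f s₁ - f s₂`, `P = ⟪Δ, τ(s₁)⟫`, `Q = ⟪Δ, τ(s₂)⟫`. The first partials of `log ‖Δ‖²` are
`2P / ‖Δ‖²` and `-2Q / ‖Δ‖²`, and the quotient rule gives the mixed partial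
`-2⟪τ(s₁), τ(s₂)⟫ / ‖Δ‖² + 4PQ / ‖Δ‖⁴`. Hence the right-hand side is
`(4 / ‖Δ‖²) (⟪τ(s₁), τ(s₂)⟫ - PQ / ‖Δ‖²)`, which is `4 / ‖Δ‖²` times the wedge inner product.
-/

open scoped RealInnerProductSpace
open Topology

variable {E : Type*} [NormedAddCommGroup E] [InnerProductSpace ℝ E]

theorem HasDerivAt.log_norm_sq {g : ℝ → E} {g' : E} {x : ℝ} (hg : HasDerivAt g g' x)
    (hx : g x ≠ 0) :
    HasDerivAt (fun t => Real.log (‖g t‖ ^ 2)) (2 * ⟪g x, g'⟫ / ‖g x‖ ^ 2) x :=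
  hg.norm_sq.log (by positivity)

section Curve

variable {f : ℝ → E}

theorem hasDerivAt_log_norm_sub_sq_left {a : ℝ} (hf : DifferentiableAt ℝ f a) {c : E}
    (h : f a ≠ c) :
    HasDerivAt (fun a => Real.log (‖f a - c‖ ^ 2))
      (2 * ⟪f a - c, deriv f a⟫ / ‖f a - c‖ ^ 2) a :=
  (hf.hasDerivAt.sub_const c).log_norm_sq (sub_ne_zero_of_ne h)

theorem hasDerivAt_log_norm_sub_sq_right {b : ℝ} (hf : DifferentiableAt ℝ f b) {c : E}
    (h : c ≠ f b) :
    HasDerivAt (fun b => Real.log (‖c - f b‖ ^ 2))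
      (-2 * ⟪c - f b, deriv f b⟫ / ‖c - f b‖ ^ 2) b := by
  simpa only [inner_neg_right, mul_neg, neg_mul] using
    (hf.hasDerivAt.const_sub c).log_norm_sq (sub_ne_zero_of_ne h)

theorem hasDerivAt_inner_div_norm_sub_sq {a : ℝ} (hf : DifferentiableAt ℝ f a) {c : E}
    (h : f a ≠ c) (v : E) :
    HasDerivAt (fun a => ⟪f a - c, v⟫ / ‖f a - c‖ ^ 2)
      ((⟪deriv f a, v⟫ * ‖f a - c‖ ^ 2 - ⟪f a - c, v⟫ * (2 * ⟪f a - c, deriv f a⟫))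
        / (‖f a - c‖ ^ 2) ^ 2) a := by
  have hsub := hf.hasDerivAt.sub_const c
  have hinner : HasDerivAt (fun a => ⟪f a - c, v⟫) ⟪deriv f a, v⟫ a := by
    simpa using hsub.inner ℝ (hasDerivAt_const a v)
  exact hinner.div hsub.norm_sq (by simpa using sub_ne_zero_of_ne h)

theorem deriv_deriv_log_norm_sub_sq (hf : Differentiable ℝ f) {s₁ s₂ : ℝ} (h : f s₁ ≠ f s₂) :
    deriv (fun a => deriv (fun b => Real.log (‖f a - f b‖ ^ 2)) s₂) s₁
      = -2 * ((⟪deriv f s₁, deriv f s₂⟫ * ‖f s₁ - f s₂‖ ^ 2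
          - ⟪f s₁ - f s₂, deriv f s₂⟫ * (2 * ⟪f s₁ - f s₂, deriv f s₁⟫))
        / (‖f s₁ - f s₂‖ ^ 2) ^ 2) := by
  have hne : ∀ᶠ a in 𝓝 s₁, f a ≠ f s₂ :=
    hf.continuous.continuousAt.eventually_ne h
  have hpartial : (fun a => deriv (fun b => Real.log (‖f a - f b‖ ^ 2)) s₂)
      =ᶠ[𝓝 s₁] fun a => -2 * (⟪f a - f s₂, deriv f s₂⟫ / ‖f a - f s₂‖ ^ 2) := by
    filter_upwards [hne] with a ha
    rw [(hasDerivAt_log_norm_sub_sq_right (hf s₂) ha).deriv, mul_div_assoc]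
  rw [hpartial.deriv_eq]
  exact ((hasDerivAt_inner_div_norm_sub_sq (hf s₁) h _).const_mul (-2)).deriv

end Curve

theorem stmt_6_general {n : ℕ} (f : ℝ → EuclideanSpace ℝ (Fin n))
    (hf : ContDiff ℝ 2 f)
    (hinj : Function.Injective f) (s1 s2 : ℝ) (hs : s1 ≠ s2) :
    2 * ((2 / ‖f s1 - f s2‖ ^ 2) *
        (⟪deriv f s1, deriv f s2⟫
          - ⟪deriv f s1, ‖f s1 - f s2‖⁻¹ • (f s1 - f s2)⟫
            * ⟪deriv f s2, ‖f s1 - f s2‖⁻¹ • (f s1 - f s2)⟫))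
      = -2 * deriv (fun a => deriv (fun b => Real.log (‖f a - f b‖ ^ 2)) s2) s1
        - (deriv (fun a => Real.log (‖f a - f s2‖ ^ 2)) s1)
          * (deriv (fun b => Real.log (‖f s1 - f b‖ ^ 2)) s2) := by
  have hdf : Differentiable ℝ f := hf.differentiable two_ne_zero
  have hne : f s1 ≠ f s2 := hinj.ne hs
  have hnorm : ‖f s1 - f s2‖ ≠ 0 := norm_ne_zero_iff.mpr (sub_ne_zero_of_ne hne)
  rw [deriv_deriv_log_norm_sub_sq hdf hne,
    (hasDerivAt_log_norm_sub_sq_left (hdf s1) hne).deriv,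
    (hasDerivAt_log_norm_sub_sq_right (hdf s2) hne).deriv,
    real_inner_smul_right, real_inner_smul_right,
    real_inner_comm (f s1 - f s2) (deriv f s1), real_inner_comm (f s1 - f s2) (deriv f s2)]
  field_simp
  ring

/-- For a `C²` embedded arc-length parametrized curve,
`2M₂(f) = −2∂²/(∂s1∂s2) log‖Δf‖² − (∂/∂s1 log‖Δf‖²)(∂/∂s2 log‖Δf‖²)`. -/
theorem stmt_6 {n : ℕ} (f : ℝ → EuclideanSpace ℝ (Fin n))
    (hf : ContDiff ℝ 2 f) (hunit : ∀ s, ‖deriv f s‖ = 1)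
    (hinj : Function.Injective f) (s1 s2 : ℝ) (hs : s1 ≠ s2) :
    2 * ((2 / ‖f s1 - f s2‖ ^ 2) *
        (⟪deriv f s1, deriv f s2⟫
          - ⟪deriv f s1, ‖f s1 - f s2‖⁻¹ • (f s1 - f s2)⟫
            * ⟪deriv f s2, ‖f s1 - f s2‖⁻¹ • (f s1 - f s2)⟫))
      = -2 * deriv (fun a => deriv (fun b => Real.log (‖f a - f b‖ ^ 2)) s2) s1
        - (deriv (fun a => Real.log (‖f a - f s2‖ ^ 2)) s1)
          * (deriv (fun b => Real.log (‖f s1 - f b‖ ^ 2)) s2) :=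
  stmt_6_general f hf hinj s1 s2 hs
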